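/- arXiv:2006.01241 — 3 statements merged into one kernel-verified Lean document; each statement's English description precedes it below -/
import Mathlib

section
/- (Toeplitz–Hausdorff) For any complex n×n matrix A, the field of values F(A) = {x*Ax : ‖x‖ = 1} is a convex subset of ℂ. -/
/-!
Normalize two points of the numerical range to `1 = ⟪x, T x⟫` and `0 = ⟪y, T y⟫` by an affine
change of `T`. After multiplying `y` by a suitable phase, the form is real on every real
combination `s • x + (1 - s) • y`, so along this path the form minus `t` times the squared norm
is a continuous real function changing sign; at a zero, normalizing the (nonzero) vector gives a
unit vector with value `t`.
-/

open ComplexConjugate Set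

theorem Complex.exists_norm_eq_one_im_mul_eq_zero (c : ℂ) : ∃ u : ℂ, ‖u‖ = 1 ∧ (u * c).im = 0 := by
  refine ⟨Complex.exp ((-c.arg : ℝ) * Complex.I), Complex.norm_exp_ofReal_mul_I _, ?_⟩
  conv_lhs => arg 1; arg 2; rw [← Complex.norm_mul_exp_arg_mul_I c]
  rw [mul_left_comm, ← Complex.exp_add, Complex.ofReal_neg, neg_mul, neg_add_cancel,
    Complex.exp_zero, mul_one, Complex.ofReal_im]

theorem Complex.im_mul_add_conj_mul (u a b : ℂ) :
    (u * a + conj u * b).im = (u * (a - conj b)).im := by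
  simp only [Complex.add_im, Complex.mul_im, Complex.sub_re, Complex.sub_im, Complex.conj_re,
    Complex.conj_im]
  ring

namespace LinearMap

variable {E : Type*} [NormedAddCommGroup E] [InnerProductSpace ℂ E]

def numericalRange (T : E →ₗ[ℂ] E) : Set ℂ :=
  {z | ∃ x : E, ‖x‖ = 1 ∧ inner ℂ x (T x) = z}

variable (T : E →ₗ[ℂ] E)

theorem inner_smul_map_smul (c : ℂ) (x : E) :
    inner ℂ (c • x) (T (c • x)) = (‖c‖ ^ 2 : ℂ) * inner ℂ x (T x) := by
  rw [map_smul, inner_smul_left, inner_smul_right, ← mul_assoc, Complex.conj_mul']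

theorem inner_ofReal_smul_add_map (s t : ℝ) (x y : E) :
    inner ℂ ((s : ℂ) • x + (t : ℂ) • y) (T ((s : ℂ) • x + (t : ℂ) • y)) =
      s ^ 2 * inner ℂ x (T x) + s * t * (inner ℂ x (T y) + inner ℂ y (T x)) +
        t ^ 2 * inner ℂ y (T y) := by
  simp only [map_add, map_smul, inner_add_left, inner_add_right, inner_smul_left,
    inner_smul_right, Complex.conj_ofReal]
  ring

theorem exists_norm_eq_one_inner_add_inner_smul_eq_ofReal (x y : E) :
    ∃ u : ℂ, ‖u‖ = 1 ∧ ∃ r : ℝ, inner ℂ x (T (u • y)) + inner ℂ (u • y) (T x) = r := by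
  obtain ⟨u, hu, hu_im⟩ := Complex.exists_norm_eq_one_im_mul_eq_zero
    (inner ℂ x (T y) - conj (inner ℂ y (T x)))
  refine ⟨u, hu, Complex.conj_eq_iff_real.mp (Complex.conj_eq_iff_im.mpr ?_)⟩
  rw [map_smul, inner_smul_left, inner_smul_right, Complex.im_mul_add_conj_mul, hu_im]

theorem mem_numericalRange_of_inner_eq {w : E} (hw : w ≠ 0) {z : ℂ}
    (h : inner ℂ w (T w) = z * ‖w‖ ^ 2) : z ∈ T.numericalRange := by
  have hnorm : ‖w‖ ≠ 0 := norm_ne_zero_iff.mpr hw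
  refine ⟨((‖w‖⁻¹ : ℝ) : ℂ) • w, ?_, ?_⟩
  · rw [norm_smul, Complex.norm_real, norm_inv, norm_norm, inv_mul_cancel₀ hnorm]
  · rw [inner_smul_map_smul, h, Complex.norm_real, norm_inv, norm_norm]
    have : (‖w‖ : ℂ) ≠ 0 := mod_cast hnorm
    push_cast
    field_simp

theorem numericalRange_smul_sub_smul_id (c d : ℂ) :
    (c • (T - d • LinearMap.id)).numericalRange = (fun z => c * (z - d)) '' T.numericalRange := by
  ext z
  constructor
  · rintro ⟨x, hx, rfl⟩
    refine ⟨inner ℂ x (T x), ⟨x, hx, rfl⟩, ?_⟩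
    simp [inner_self_eq_norm_sq_to_K, hx]
  · rintro ⟨_, ⟨x, hx, rfl⟩, rfl⟩
    refine ⟨x, hx, ?_⟩
    simp [inner_self_eq_norm_sq_to_K, hx]

theorem ofReal_mem_numericalRange_of_inner_add_inner_eq_ofReal {x y : E} (hx : ‖x‖ = 1)
    (hy : ‖y‖ = 1) (hxT : inner ℂ x (T x) = 1) (hyT : inner ℂ y (T y) = 0) {r : ℝ}
    (hr : inner ℂ x (T y) + inner ℂ y (T x) = r) {t : ℝ} (ht : t ∈ Icc (0 : ℝ) 1) :
    (t : ℂ) ∈ T.numericalRange := by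
  let w : ℝ → E := fun s => (s : ℂ) • x + ((1 - s : ℝ) : ℂ) • y
  have hwT : ∀ s, inner ℂ (w s) (T (w s)) = ((s ^ 2 + s * (1 - s) * r : ℝ) : ℂ) := by
    intro s
    rw [inner_ofReal_smul_add_map, hxT, hyT, hr]
    push_cast
    ring
  have hw : ∀ s, w s ≠ 0 := by
    intro s h0
    -- evaluating the form on `s • x = -((1 - s) • y)` gives `s ^ 2 = 0`
    obtain rfl : s = 0 := by
      have := congrArg (fun v => inner ℂ v (T v)) (eq_neg_of_add_eq_zero_left h0)
      simp only [← neg_smul, inner_smul_map_smul, hxT, hyT] at this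
      simpa using this
    simp only [w, Complex.ofReal_zero, zero_smul, sub_zero, Complex.ofReal_one, one_smul,
      zero_add] at h0
    simp [h0] at hy
  let f : ℝ → ℝ := fun s => s ^ 2 + s * (1 - s) * r - t * ‖w s‖ ^ 2
  have hf : ContinuousOn f (Icc 0 1) := by
    simp only [f, w]
    fun_prop
  obtain ⟨s, -, hfs⟩ : ∃ s ∈ Icc (0 : ℝ) 1, f s = 0 :=
    intermediate_value_Icc zero_le_one hf ⟨by simp [f, w, hy, ht.1], by simp [f, w, hx, ht.2]⟩
  refine T.mem_numericalRange_of_inner_eq (hw s) ?_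
  rw [hwT]
  norm_cast
  linarith

theorem ofReal_mem_numericalRange_of_zero_mem_of_one_mem (h₀ : 0 ∈ T.numericalRange)
    (h₁ : 1 ∈ T.numericalRange) {t : ℝ} (ht : t ∈ Icc (0 : ℝ) 1) :
    (t : ℂ) ∈ T.numericalRange := by
  obtain ⟨x, hx, hxT⟩ := h₁
  obtain ⟨y, hy, hyT⟩ := h₀
  obtain ⟨u, hu, r, hr⟩ := T.exists_norm_eq_one_inner_add_inner_smul_eq_ofReal x y
  have huy : ‖u • y‖ = 1 := by rw [norm_smul, hu, hy, one_mul]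
  have huyT : inner ℂ (u • y) (T (u • y)) = 0 := by rw [inner_smul_map_smul, hyT, mul_zero]
  exact T.ofReal_mem_numericalRange_of_inner_add_inner_eq_ofReal hx huy hxT huyT hr ht

theorem convex_numericalRange : Convex ℝ T.numericalRange := by
  refine convex_iff_segment_subset.mpr fun z₁ h₁ z₂ h₂ => ?_
  obtain rfl | hne := eq_or_ne z₁ z₂
  · simpa [segment_same] using h₁
  have hsub : z₂ - z₁ ≠ 0 := sub_ne_zero.mpr hne.symm
  rw [segment_eq_image']
  rintro _ ⟨t, ht, rfl⟩
  set S := (z₂ - z₁)⁻¹ • (T - z₁ • LinearMap.id)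
  have hS : S.numericalRange = (fun z => (z₂ - z₁)⁻¹ * (z - z₁)) '' T.numericalRange :=
    T.numericalRange_smul_sub_smul_id _ _
  have ht' : (t : ℂ) ∈ S.numericalRange := by
    refine S.ofReal_mem_numericalRange_of_zero_mem_of_one_mem ?_ ?_ ht <;> rw [hS]
    · exact ⟨z₁, h₁, by simp⟩
    · exact ⟨z₂, h₂, by field_simp⟩
  rw [hS] at ht'
  obtain ⟨z, hz, hzt⟩ := ht'
  convert hz using 1
  simp only at hzt ⊢
  rw [Complex.real_smul, ← hzt]
  field_simp
  ring

end LinearMap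

theorem fov_convex (n : ℕ) (A : Matrix (Fin n) (Fin n) ℂ) :
    Convex ℝ {z : ℂ | ∃ x : EuclideanSpace ℂ (Fin n), ‖x‖ = 1 ∧
      star (x : Fin n → ℂ) ⬝ᵥ A.mulVec (x : Fin n → ℂ) = z} := by
  convert (Matrix.toEuclideanLin A).convex_numericalRange using 1
  ext z
  exact exists_congr fun x => and_congr_right fun _ => by rw [dotProduct_comm]; rfl
end

section
/- (Flow decomposition implies matrix decomposition) Let A be a complex n×n matrix with H = (A + Aᴴ)/2, K = (A − Aᴴ)/(2i), and F_A(t) = cos(t)H + sin(t)K. Suppose U is unitary and there exist t_a, t_b ∈ ℝ with sin(t_b − t_a) ≠ 0 such that both Uᴴ F_A(t_a) U and Uᴴ F_A(t_b) U have zero (i,j) entries for all pairs (i,j) with i ∈ S, j ∉ S (for a fixed index set S). Then Uᴴ A U also has zero (i,j) entries for all such pairs, i.e., A is block-decomposed by the same unitary similarity. -/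
open Matrix

theorem flow_decomposition_implies_matrix_decomposition
    (n : ℕ) (A U : Matrix (Fin n) (Fin n) ℂ) (hU : Uᴴ * U = 1)
    (S : Set (Fin n)) (ta tb : ℝ) (hst : Real.sin (tb - ta) ≠ 0)
    (ha : ∀ i j : Fin n, i ∈ S → j ∉ S →
      (Uᴴ * ((Real.cos ta : ℂ) • (((2 : ℂ)⁻¹) • (A + Aᴴ)) +
        (Real.sin ta : ℂ) • (((2 * Complex.I : ℂ)⁻¹) • (A - Aᴴ))) * U) i j = 0)
    (hb : ∀ i j : Fin n, i ∈ S → j ∉ S →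
      (Uᴴ * ((Real.cos tb : ℂ) • (((2 : ℂ)⁻¹) • (A + Aᴴ)) +
        (Real.sin tb : ℂ) • (((2 * Complex.I : ℂ)⁻¹) • (A - Aᴴ))) * U) i j = 0) :
    ∀ i j : Fin n, i ∈ S → j ∉ S → (Uᴴ * A * U) i j = 0 := by
  intro i j hi hj
  set H : Matrix (Fin n) (Fin n) ℂ := ((2 : ℂ)⁻¹) • (A + Aᴴ) with hH
  set K : Matrix (Fin n) (Fin n) ℂ := ((2 * Complex.I : ℂ)⁻¹) • (A - Aᴴ) with hK
  set x : ℂ := (Uᴴ * H * U) i j with hx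
  set y : ℂ := (Uᴴ * K * U) i j with hy
  have e1 : (Real.cos ta : ℂ) * x + (Real.sin ta : ℂ) * y = 0 := by
    have := ha i j hi hj
    simpa [Matrix.mul_add, Matrix.add_mul, Matrix.mul_smul, Matrix.smul_mul,
      Matrix.add_apply, Matrix.smul_apply, smul_eq_mul, hx, hy] using this
  have e2 : (Real.cos tb : ℂ) * x + (Real.sin tb : ℂ) * y = 0 := by
    have := hb i j hi hj
    simpa [Matrix.mul_add, Matrix.add_mul, Matrix.mul_smul, Matrix.smul_mul,
      Matrix.add_apply, Matrix.smul_apply, smul_eq_mul, hx, hy] using this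
  have hd : ((Real.sin tb : ℂ) * (Real.cos ta : ℂ)
      - (Real.cos tb : ℂ) * (Real.sin ta : ℂ)) ≠ 0 := by
    rw [Real.sin_sub] at hst
    exact_mod_cast hst
  have hy0 : y = 0 := by
    have h : ((Real.sin tb : ℂ) * (Real.cos ta : ℂ)
        - (Real.cos tb : ℂ) * (Real.sin ta : ℂ)) * y =
        (Real.cos ta : ℂ) * ((Real.cos tb : ℂ) * x + (Real.sin tb : ℂ) * y)
        - (Real.cos tb : ℂ) * ((Real.cos ta : ℂ) * x + (Real.sin ta : ℂ) * y) := by ring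
    rw [e1, e2] at h
    simpa using (mul_eq_zero.mp (by linear_combination h)).resolve_left hd
  have hx0 : x = 0 := by
    have h : ((Real.sin tb : ℂ) * (Real.cos ta : ℂ)
        - (Real.cos tb : ℂ) * (Real.sin ta : ℂ)) * x =
        (Real.sin tb : ℂ) * ((Real.cos ta : ℂ) * x + (Real.sin ta : ℂ) * y)
        - (Real.sin ta : ℂ) * ((Real.cos tb : ℂ) * x + (Real.sin tb : ℂ) * y) := by ring
    rw [e1, e2] at h
    simpa using (mul_eq_zero.mp (by linear_combination h)).resolve_left hd
  have hA : A = H + Complex.I • K := by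
    rw [hH, hK, smul_smul]
    have hIne : (Complex.I : ℂ) ≠ 0 := Complex.I_ne_zero
    have : Complex.I * (2 * Complex.I : ℂ)⁻¹ = (2 : ℂ)⁻¹ := by
      rw [mul_inv, mul_comm Complex.I, mul_assoc, inv_mul_cancel₀ Complex.I_ne_zero, mul_one]
    rw [this]
    ext a b
    simp [Matrix.add_apply, Matrix.smul_apply, Matrix.sub_apply, smul_eq_mul]
    ring
  calc (Uᴴ * A * U) i j = (Uᴴ * (H + Complex.I • K) * U) i j := by rw [← hA]
    _ = x + Complex.I * y := by
        simp [Matrix.mul_add, Matrix.add_mul, Matrix.mul_smul, Matrix.smul_mul,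
          Matrix.add_apply, Matrix.smul_apply, smul_eq_mul, hx, hy]
    _ = 0 := by rw [hx0, hy0]; ring
end

section
/- If F(A) is a single point {c}, then A = c·I. -/
/-!
If `⟪u, T u⟫ = c` on the unit sphere, homogeneity gives `⟪x, (T - c • 1) x⟫ = 0` for every `x`.
Over `ℂ` polarization recovers an operator from its quadratic form, so `T = c • 1`; for a matrix
`A` this is applied to the operator `toEuclideanLin A`, whose quadratic form is `star x ⬝ᵥ A *ᵥ x`.
-/

open Matrix

open scoped InnerProductSpace

section

variable {V : Type*} [NormedAddCommGroup V] [InnerProductSpace ℂ V]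

theorem inner_self_apply_eq_mul_norm_sq {T : V →ₗ[ℂ] V} {c : ℂ}
    (h : ∀ u : V, ‖u‖ = 1 → ⟪u, T u⟫_ℂ = c) (x : V) : ⟪x, T x⟫_ℂ = c * (‖x‖ : ℂ) ^ 2 := by
  rcases eq_or_ne x 0 with rfl | hx
  · simp
  have hnorm : (‖x‖ : ℂ) ≠ 0 := by exact_mod_cast norm_ne_zero_iff.mpr hx
  have hu := h ((‖x‖ : ℂ)⁻¹ • x) (by simp [norm_smul, hx])
  rw [map_smul, inner_smul_left, inner_smul_right, map_inv₀, Complex.conj_ofReal] at hu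
  rw [← hu]
  field_simp

theorem LinearMap.eq_smul_one_of_inner_self_apply_eq {T : V →ₗ[ℂ] V} {c : ℂ}
    (h : ∀ u : V, ‖u‖ = 1 → ⟪u, T u⟫_ℂ = c) : T = c • 1 := by
  rw [← sub_eq_zero, ← inner_map_self_eq_zero]
  intro x
  rw [← inner_conj_symm, LinearMap.sub_apply, inner_sub_right,
    inner_self_apply_eq_mul_norm_sq h, LinearMap.smul_apply, Module.End.one_apply,
    inner_smul_right, inner_self_eq_norm_sq_to_K]
  simp

end

theorem Matrix.star_dotProduct_mulVec_eq_inner {𝕜 ι : Type*} [RCLike 𝕜] [Fintype ι]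
    [DecidableEq ι] (A : Matrix ι ι 𝕜) (x : EuclideanSpace 𝕜 ι) :
    star (x : ι → 𝕜) ⬝ᵥ A *ᵥ (x : ι → 𝕜) = ⟪x, toEuclideanLin A x⟫_𝕜 :=
  dotProduct_comm _ _

theorem fov_singleton_implies_scalar_general (n : ℕ)
    (A : Matrix (Fin n) (Fin n) ℂ) (c : ℂ)
    (h : {z : ℂ | ∃ x : EuclideanSpace ℂ (Fin n), ‖x‖ = 1 ∧
        star (x : Fin n → ℂ) ⬝ᵥ A.mulVec (x : Fin n → ℂ) = z} = {c}) :
    A = c • (1 : Matrix (Fin n) (Fin n) ℂ) := by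
  have hunit : ∀ x : EuclideanSpace ℂ (Fin n), ‖x‖ = 1 → ⟪x, toEuclideanLin A x⟫_ℂ = c :=
    fun x hx => by
      rw [← star_dotProduct_mulVec_eq_inner]
      exact h.subset ⟨x, hx, rfl⟩
  apply toEuclideanLin.injective
  rw [LinearMap.eq_smul_one_of_inner_self_apply_eq hunit, map_smul, toLpLin_one,
    Module.End.one_eq_id]

theorem fov_singleton_implies_scalar (n : ℕ) (hn : 1 ≤ n)
    (A : Matrix (Fin n) (Fin n) ℂ) (c : ℂ)
    (h : {z : ℂ | ∃ x : EuclideanSpace ℂ (Fin n), ‖x‖ = 1 ∧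
        star (x : Fin n → ℂ) ⬝ᵥ A.mulVec (x : Fin n → ℂ) = z} = {c}) :
    A = c • (1 : Matrix (Fin n) (Fin n) ℂ) :=
  fov_singleton_implies_scalar_general n A c h
end
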